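/- arXiv:1911.05411 — 7 statements merged into one kernel-verified Lean document; each statement's English description precedes it below -/
import Mathlib

section
/- Menon's identity: For every positive integer n, the sum over a from 1 to n with gcd(a,n)=1 of gcd(a-1,n) equals φ(n)·τ(n), where φ is Euler's totient and τ is the number-of-divisors function. -/
/-!
Writing `gcd (a - 1) n = ∑_{d ∣ n, d ∣ a - 1} φ d` and exchanging the sums, the identity reduces to
counting, for each `d ∣ n`, the units `a` modulo `n` with `a ≡ 1 (mod d)`. These form the kernel of
the reduction map `(ZMod n)ˣ → (ZMod d)ˣ`, which is surjective, so there are `φ n / φ d` of them,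
and each divisor contributes exactly `φ n`.
-/

open Finset

theorem ZMod.injOn_natCast_Icc_one (n : ℕ) : Set.InjOn (Nat.cast : ℕ → ZMod n) (Icc 1 n) := by
  intro a ha b hb hab
  simp only [coe_Icc, Set.mem_Icc] at ha hb
  refine ((ZMod.natCast_eq_natCast_iff a b n).mp hab).eq_of_abs_lt ?_
  rw [abs_sub_lt_iff]
  omega

theorem ZMod.image_natCast_Icc_one (n : ℕ) [NeZero n] :
    (Icc 1 n).image (Nat.cast : ℕ → ZMod n) = univ :=
  eq_univ_of_card _ <| by rw [card_image_of_injOn (injOn_natCast_Icc_one n), Nat.card_Icc,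
    ZMod.card, Nat.add_sub_cancel]

theorem ZMod.card_filter_Icc_one_natCast (n : ℕ) [NeZero n] (p : ZMod n → Prop)
    [DecidablePred p] : #((Icc 1 n).filter fun a : ℕ => p a) = #{x : ZMod n | p x} := by
  rw [← image_natCast_Icc_one n, filter_image,
    card_image_of_injOn ((injOn_natCast_Icc_one n).mono (filter_subset _ _))]

theorem card_filter_units_eq_card_filter_isUnit (M : Type*) [Monoid M] [Fintype M] [Fintype Mˣ]
    [DecidablePred (IsUnit : M → Prop)] (p : M → Prop) [DecidablePred p] :
    #{u : Mˣ | p u} = #{x : M | IsUnit x ∧ p x} := by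
  refine card_nbij (↑) (fun u hu => ?_) Units.val_injective.injOn fun x hx => ?_
  · simp_all
  · simp only [coe_filter, mem_univ, true_and] at hx
    exact ⟨hx.1.unit, by simpa using hx.2, rfl⟩

theorem ZMod.natCast_eq_one_iff_dvd_sub_one {a : ℕ} (ha : 1 ≤ a) (d : ℕ) :
    (a : ZMod d) = 1 ↔ d ∣ a - 1 := by
  rw [← ZMod.natCast_eq_zero_iff, Nat.cast_sub ha, Nat.cast_one, sub_eq_zero]

theorem ZMod.natCard_units (n : ℕ) [NeZero n] : Nat.card (ZMod n)ˣ = n.totient := by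
  rw [Nat.card_eq_fintype_card, ZMod.card_units_eq_totient]

theorem ZMod.card_ker_unitsMap_mul_totient {n d : ℕ} [NeZero n] (hd : d ∣ n) :
    Nat.card (unitsMap hd).ker * d.totient = n.totient := by
  have : NeZero d := ⟨fun h => NeZero.ne n (Nat.eq_zero_of_zero_dvd (h ▸ hd))⟩
  rw [← natCard_units n, ← natCard_units d, ← (unitsMap hd).ker.card_mul_index,
    Subgroup.index_ker, MonoidHom.range_eq_top_of_surjective _ (unitsMap_surjective hd),
    Subgroup.card_top]

theorem Nat.card_filter_coprime_dvd_sub_one_mul_totient {n d : ℕ} (hn : n ≠ 0) (hd : d ∣ n) :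
    #{a ∈ Icc 1 n | a.Coprime n ∧ d ∣ a - 1} * d.totient = n.totient := by
  have : NeZero n := ⟨hn⟩
  suffices Nat.card (ZMod.unitsMap hd).ker = #{a ∈ Icc 1 n | a.Coprime n ∧ d ∣ a - 1} by
    rw [← this, ZMod.card_ker_unitsMap_mul_totient]
  calc Nat.card (ZMod.unitsMap hd).ker
      = #{u : (ZMod n)ˣ | ZMod.castHom hd (ZMod d) u = 1} := by
        rw [Nat.card_eq_fintype_card, Fintype.card_subtype]
        simp only [MonoidHom.mem_ker, Units.ext_iff]
        rfl
    _ = #{x : ZMod n | IsUnit x ∧ ZMod.castHom hd (ZMod d) x = 1} :=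
        card_filter_units_eq_card_filter_isUnit (ZMod n) fun x => ZMod.castHom hd (ZMod d) x = 1
    _ = #{a ∈ Icc 1 n | a.Coprime n ∧ d ∣ a - 1} := by
        rw [← ZMod.card_filter_Icc_one_natCast n
          fun x => IsUnit x ∧ ZMod.castHom hd (ZMod d) x = 1]
        congr 1
        refine filter_congr fun a ha => ?_
        rw [ZMod.isUnit_iff_coprime, map_natCast,
          ZMod.natCast_eq_one_iff_dvd_sub_one (mem_Icc.mp ha).1]

theorem Nat.gcd_eq_sum_totient_filter_dvd (m : ℕ) {n : ℕ} (hn : n ≠ 0) :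
    m.gcd n = ∑ d ∈ n.divisors with d ∣ m, d.totient := by
  rw [← Nat.sum_totient (m.gcd n), ← divisors_filter_dvd_of_dvd hn (gcd_dvd_right m n)]
  refine sum_congr (filter_congr fun d hd => ?_) fun _ _ => rfl
  rw [Nat.dvd_gcd_iff, and_iff_left (Nat.dvd_of_mem_divisors hd)]

theorem menon_identity_general (n : ℕ) :
    ∑ a ∈ (Finset.Icc 1 n).filter (fun a => Nat.gcd a n = 1), Nat.gcd (a - 1) n
      = n.totient * n.divisors.card := by
  obtain rfl | hn := eq_or_ne n 0
  · simp
  calc ∑ a ∈ (Icc 1 n).filter (fun a => Nat.gcd a n = 1), Nat.gcd (a - 1) n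
      = ∑ a ∈ (Icc 1 n).filter (fun a => Nat.gcd a n = 1),
          ∑ d ∈ n.divisors with d ∣ a - 1, d.totient :=
        sum_congr rfl fun a _ => Nat.gcd_eq_sum_totient_filter_dvd (a - 1) hn
    _ = ∑ d ∈ n.divisors, ∑ a ∈ Icc 1 n with a.Coprime n ∧ d ∣ a - 1, d.totient :=
        sum_comm' fun a d => by simp only [mem_filter]; tauto
    _ = ∑ d ∈ n.divisors, n.totient := sum_congr rfl fun d hd => by
        rw [sum_const, smul_eq_mul,
          Nat.card_filter_coprime_dvd_sub_one_mul_totient hn (Nat.dvd_of_mem_divisors hd)]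
    _ = n.totient * n.divisors.card := by rw [sum_const, smul_eq_mul, mul_comm]

theorem menon_identity (n : ℕ) (hn : 0 < n) :
    ∑ a ∈ (Finset.Icc 1 n).filter (fun a => Nat.gcd a n = 1), Nat.gcd (a - 1) n
      = n.totient * n.divisors.card :=
  menon_identity_general n
end

section
/- If n divides m, then ∑_{a=1, gcd(a,m)=1}^{m} gcd(a-1,n) = φ(m)·τ(n). -/
open Finset

lemma key_count (m d : ℕ) (hm : 0 < m) (hd : 0 < d) (hdm : d ∣ m) :
    d.totient * ((Finset.Icc 1 m).filter (fun a => Nat.gcd a m = 1 ∧ d ∣ a - 1)).card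
      = m.totient := by
  haveI : NeZero m := ⟨hm.ne'⟩
  haveI : NeZero d := ⟨hd.ne'⟩
  set f := ZMod.unitsMap (n := d) (m := m) hdm with hf
  -- the filter set is in bijection with the kernel of f
  have hcast : ∀ a : ℕ, 1 ≤ a → ((a : ZMod d) = 1 ↔ d ∣ a - 1) := by
    intro a ha
    rw [show (1 : ZMod d) = ((1 : ℕ) : ZMod d) by simp, ZMod.natCast_eq_natCast_iff]
    exact ⟨fun h => (Nat.modEq_iff_dvd' ha).mp h.symm,
      fun h => ((Nat.modEq_iff_dvd' ha).mpr h).symm⟩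
  have hbij : ((Finset.Icc 1 m).filter (fun a => Nat.gcd a m = 1 ∧ d ∣ a - 1)).card
      = (Finset.univ.filter (fun u : (ZMod m)ˣ => f u = 1)).card := by
    apply Finset.card_bij (fun a ha =>
      ZMod.unitOfCoprime a (Finset.mem_filter.mp ha).2.1)
    · intro a ha
      obtain ⟨hmem, hcop, hdvd⟩ := Finset.mem_filter.mp ha
      obtain ⟨ha1, ham⟩ := Finset.mem_Icc.mp hmem
      simp only [Finset.mem_filter, Finset.mem_univ, true_and]
      ext
      simp only [hf, ZMod.unitsMap_def, Units.coe_map, ZMod.coe_unitOfCoprime,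
        MonoidHom.coe_coe, ZMod.castHom_apply, Units.val_one]
      have hmn : ((ZMod.castHom hdm (ZMod d)) (((a : ℕ) : ZMod m))) = ((a : ℕ) : ZMod d) :=
        map_natCast _ a
      rw [ZMod.castHom_apply] at hmn
      rw [hmn]
      exact (hcast a ha1).mpr hdvd
    · intro a ha b hb hab
      have : ((a : ℕ) : ZMod m) = ((b : ℕ) : ZMod m) := by
        have := congrArg (fun u : (ZMod m)ˣ => (u : ZMod m)) hab
        simpa [ZMod.coe_unitOfCoprime] using this
      have hmod : a ≡ b [MOD m] := (ZMod.natCast_eq_natCast_iff _ _ _).mp this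
      obtain ⟨ha1, ham⟩ := Finset.mem_Icc.mp (Finset.mem_filter.mp ha).1
      obtain ⟨hb1, hbm⟩ := Finset.mem_Icc.mp (Finset.mem_filter.mp hb).1
      rcases le_total a b with hle | hle
      · have := (Nat.modEq_iff_dvd' hle).mp hmod
        have := Nat.eq_zero_of_dvd_of_lt this (by omega)
        omega
      · have := (Nat.modEq_iff_dvd' hle).mp hmod.symm
        have := Nat.eq_zero_of_dvd_of_lt this (by omega)
        omega
    · intro u hu
      simp only [Finset.mem_filter, Finset.mem_univ, true_and] at hu
      set x := ((u : ZMod m)).val with hx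
      have hxlt : x < m := ZMod.val_lt _
      refine ⟨if x = 0 then m else x, ?_, ?_⟩
      · -- membership
        have hcastu : ((if x = 0 then m else x : ℕ) : ZMod m) = (u : ZMod m) := by
          split_ifs with h0
          · rw [ZMod.natCast_self]
            have : (u : ZMod m).val = 0 := h0
            exact ((ZMod.val_eq_zero _).mp this).symm
          · rw [hx, ZMod.natCast_val, ZMod.cast_id]
        have hcop : Nat.gcd (if x = 0 then m else x) m = 1 := by
          have : IsUnit (((if x = 0 then m else x : ℕ)) : ZMod m) := hcastu ▸ u.isUnit
          exact (ZMod.isUnit_iff_coprime _ _).mp this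
        have h1le : 1 ≤ (if x = 0 then m else x) := by
          split_ifs with h0
          · exact hm
          · omega
        refine Finset.mem_filter.mpr ⟨Finset.mem_Icc.mpr ⟨h1le, by split_ifs <;> omega⟩,
          hcop, ?_⟩
        · rw [← hcast _ h1le]
          have hud : (ZMod.cast ((u : ZMod m)) : ZMod d) = 1 := by
            have := congrArg (fun w : (ZMod d)ˣ => (w : ZMod d)) hu
            simpa [hf, ZMod.unitsMap_def] using this
          have hmn : ((ZMod.castHom hdm (ZMod d)) ((((if x = 0 then m else x) : ℕ) : ZMod m)))
              = (((if x = 0 then m else x) : ℕ) : ZMod d) := map_natCast _ _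
          rw [ZMod.castHom_apply, hcastu, hud] at hmn
          exact hmn.symm
      · -- equality of units
        ext
        simp only [ZMod.coe_unitOfCoprime]
        split_ifs with h0
        · rw [ZMod.natCast_self]
          exact ((ZMod.val_eq_zero _).mp h0).symm
        · rw [hx, ZMod.natCast_val, ZMod.cast_id]
  rw [hbij]
  -- now group theory
  have hker : (Finset.univ.filter (fun u : (ZMod m)ˣ => f u = 1)).card
      = Nat.card f.ker := by
    rw [Nat.card_eq_fintype_card, Fintype.card_subtype]
    congr 1
    ext u
    simp [f.mem_ker]
  rw [hker]
  have hsurj := ZMod.unitsMap_surjective (n := d) hdm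
  have h1 : Nat.card ((ZMod m)ˣ) = Nat.card ((ZMod m)ˣ ⧸ f.ker) * Nat.card f.ker :=
    Subgroup.card_eq_card_quotient_mul_card_subgroup f.ker
  have h2 : Nat.card ((ZMod m)ˣ ⧸ f.ker) = Nat.card ((ZMod d)ˣ) :=
    Nat.card_congr (QuotientGroup.quotientKerEquivOfSurjective f hsurj).toEquiv
  have h3 : Nat.card ((ZMod m)ˣ) = m.totient := by
    rw [Nat.card_eq_fintype_card, ZMod.card_units_eq_totient]
  have h4 : Nat.card ((ZMod d)ˣ) = d.totient := by
    rw [Nat.card_eq_fintype_card, ZMod.card_units_eq_totient]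
  rw [h2, h3, h4] at h1
  omega

theorem jafari_madadi_identity (m n : ℕ) (hm : 0 < m) (hn : 0 < n) (h : n ∣ m) :
    ∑ a ∈ (Finset.Icc 1 m).filter (fun a => Nat.gcd a m = 1), Nat.gcd (a - 1) n
      = m.totient * n.divisors.card := by
  have expand : ∀ a ∈ (Finset.Icc 1 m).filter (fun a => Nat.gcd a m = 1),
      Nat.gcd (a - 1) n = ∑ d ∈ n.divisors, if d ∣ a - 1 then d.totient else 0 := by
    intro a _
    rw [← Finset.sum_filter]
    have hdiv : (Nat.gcd (a - 1) n).divisors = n.divisors.filter (fun d => d ∣ a - 1) := by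
      ext e
      simp only [Nat.mem_divisors, Finset.mem_filter, Nat.dvd_gcd_iff]
      constructor
      · rintro ⟨⟨h1, h2⟩, -⟩
        exact ⟨⟨h2, hn.ne'⟩, h1⟩
      · rintro ⟨⟨h2, -⟩, h1⟩
        exact ⟨⟨h1, h2⟩, by simp [Nat.gcd_eq_zero_iff, hn.ne']⟩
    rw [← hdiv, Nat.sum_totient]
  rw [Finset.sum_congr rfl expand, Finset.sum_comm]
  have step : ∀ d ∈ n.divisors,
      ∑ a ∈ (Finset.Icc 1 m).filter (fun a => Nat.gcd a m = 1),
        (if d ∣ a - 1 then d.totient else 0) = m.totient := by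
    intro d hd
    rw [← Finset.sum_filter, Finset.filter_filter, Finset.sum_const, smul_eq_mul, mul_comm]
    exact key_count m d hm (Nat.pos_of_mem_divisors hd) ((Nat.mem_divisors.mp hd).1.trans h)
  rw [Finset.sum_congr rfl step, Finset.sum_const, smul_eq_mul, mul_comm]
end

section
/- For positive integers n, ℓ and nonnegative integer k: ∑ over a, b₁, …, b_k each ranging over 1..n with gcd(a,n)=1 of gcd(a^ℓ - 1, b₁, …, b_k, n) equals φ(n) · (id_k ∗ C^{(ℓ)})(n), where id_k(n)=n^k, ∗ is Dirichlet convolution, and C^{(ℓ)}(n) is the number of x mod n with x^ℓ ≡ 1 (mod n). -/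
/-!
Expanding `gcd m n = ∑_{d ∣ n, d ∣ m} φ d` and exchanging the sums turns the left-hand side into
`∑_{d ∣ n} φ(d) · (n/d)^k · #{a ∈ (ℤ/n)ˣ : a^ℓ ≡ 1 mod d}`. The set counted last is the preimage
of the `ℓ`-th roots of unity of `(ℤ/d)ˣ` under the surjection `(ℤ/n)ˣ → (ℤ/d)ˣ`, so it has
`φ(n)/φ(d) · C^{(ℓ)}(d)` elements. Reindexing `d ↦ n/d` gives the right-hand side.
-/

open Finset
open scoped Nat

namespace Nat

theorem gcd_eq_sum_totient_filter_divisors (m : ℕ) {n : ℕ} (hn : n ≠ 0) :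
    gcd m n = ∑ d ∈ n.divisors with d ∣ m, φ d := by
  rw [← sum_totient (gcd m n)]
  congr 1
  ext d
  simp only [mem_filter, mem_divisors, dvd_gcd_iff, ne_eq, gcd_eq_zero_iff, hn, and_false,
    not_false_eq_true, and_true]
  tauto

theorem sum_sum_gcd_gcd_eq_sum_divisors {α β : Type*} (A : Finset α) (B : Finset β)
    (f : α → ℕ) (g : β → ℕ) {n : ℕ} (hn : n ≠ 0) :
    ∑ a ∈ A, ∑ b ∈ B, gcd (f a) (gcd (g b) n)
      = ∑ d ∈ n.divisors, φ d * (#{a ∈ A | d ∣ f a} * #{b ∈ B | d ∣ g b}) := by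
  simp_rw [← gcd_assoc, gcd_eq_sum_totient_filter_divisors _ hn, sum_filter, dvd_gcd_iff]
  rw [sum_congr rfl fun a _ => Finset.sum_comm, Finset.sum_comm]
  refine sum_congr rfl fun d _ => ?_
  simp_rw [Finset.card_filter, sum_mul_sum, mul_sum]
  refine sum_congr rfl fun a _ => sum_congr rfl fun b _ => ?_
  by_cases ha : d ∣ f a <;> by_cases hb : d ∣ g b <;> simp [ha, hb]

theorem Icc_filter_dvd_card_eq_div (n d : ℕ) : #{x ∈ Icc 1 n | d ∣ x} = n / d := by
  rw [← Ioc_filter_dvd_card_eq_div, ← Icc_add_one_left_eq_Ioc, zero_add]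

theorem card_filter_piFinset_Icc_dvd_gcd (ι : Type*) [Fintype ι] [DecidableEq ι] (n d : ℕ) :
    #{b ∈ Fintype.piFinset fun _ : ι => Icc 1 n | d ∣ univ.gcd b}
      = (n / d) ^ Fintype.card ι := by
  have : {b ∈ Fintype.piFinset fun _ : ι => Icc 1 n | d ∣ univ.gcd b}
      = Fintype.piFinset fun _ : ι => {x ∈ Icc 1 n | d ∣ x} := by
    ext b
    simp [Finset.dvd_gcd_iff, forall_and]
  rw [this, Fintype.card_piFinset, prod_const, Icc_filter_dvd_card_eq_div, Finset.card_univ]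

end Nat

namespace ZMod

theorem card_filter_range_natCast (n : ℕ) [NeZero n] (P : ZMod n → Prop)
    [DecidablePred fun x : ℕ => P x] :
    #{x ∈ range n | P ((x : ℕ) : ZMod n)} = Nat.card {x : ZMod n // P x} := by
  classical
  rw [Nat.card_eq_fintype_card, Fintype.card_subtype]
  refine card_nbij' Nat.cast val ?_ ?_ ?_ ?_
  · intro x hx
    simp_all
  · intro x hx
    simp_all [val_lt]
  · intro x hx
    simp_all [Nat.mod_eq_of_lt]
  · intro x _
    simp

theorem card_filter_Icc_natCast (n : ℕ) [NeZero n] (P : ZMod n → Prop)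
    [DecidablePred fun x : ℕ => P x] :
    #{x ∈ Icc 1 n | P ((x : ℕ) : ZMod n)} = Nat.card {x : ZMod n // P x} := by
  have hperiodic : Function.Periodic (fun x : ℕ => P x) n := fun x => by simp
  rw [← card_filter_range_natCast, ← Nat.count_eq_card_filter_range,
    ← Nat.filter_Ico_card_eq_of_periodic 1 n _ hperiodic, add_comm, Ico_add_one_right_eq_Icc]

theorem natCast_eq_one_iff_dvd_sub_one_s3 {m : ℕ} (hm : 1 ≤ m) (d : ℕ) :
    (m : ZMod d) = 1 ↔ d ∣ m - 1 := by
  rw [← natCast_eq_zero_iff, Nat.cast_sub hm, Nat.cast_one, sub_eq_zero]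

end ZMod

theorem Units.card_subtype_val {M : Type*} [Monoid M] (P : M → Prop) :
    Nat.card {u : Mˣ // P u} = Nat.card {x : M // IsUnit x ∧ P x} :=
  Nat.card_congr
    { toFun u := ⟨u.1, u.1.isUnit, u.2⟩
      invFun x := ⟨x.2.1.unit, x.2.2⟩
      left_inv _ := Subtype.ext (Units.ext rfl)
      right_inv _ := rfl }

theorem card_rootsOfUnity_eq_card_pow_eq_one {M : Type*} [CommMonoid M] {ℓ : ℕ} (hℓ : ℓ ≠ 0) :
    Nat.card (rootsOfUnity ℓ M) = Nat.card {x : M // x ^ ℓ = 1} := by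
  calc Nat.card (rootsOfUnity ℓ M)
      = Nat.card {u : Mˣ // (u : M) ^ ℓ = 1} :=
        Nat.card_congr (Equiv.subtypeEquivRight fun u => mem_rootsOfUnity' ℓ u)
    _ = Nat.card {x : M // IsUnit x ∧ x ^ ℓ = 1} := Units.card_subtype_val (· ^ ℓ = 1)
    _ = Nat.card {x : M // x ^ ℓ = 1} :=
        Nat.card_congr (Equiv.subtypeEquivRight fun x =>
          and_iff_right_of_imp fun hx => IsUnit.of_pow_eq_one hx hℓ)

theorem Subgroup.card_comap_mul_card_of_surjective {G H : Type*} [Group G] [Group H]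
    (K : Subgroup H) {f : G →* H} (hf : Function.Surjective f) :
    Nat.card (K.comap f) * Nat.card H = Nat.card G * Nat.card K := by
  rw [← K.index_mul_card, ← (K.comap f).card_mul_index, K.index_comap_of_surjective hf, mul_assoc]

theorem card_filter_Icc_coprime_dvd_pow_sub_one {n d : ℕ} [NeZero n] (hd : d ∣ n) (ℓ : ℕ) :
    #{a ∈ Icc 1 n | a.gcd n = 1 ∧ d ∣ a ^ ℓ - 1}
      = Nat.card ((rootsOfUnity ℓ (ZMod d)).comap (ZMod.unitsMap hd)) := by
  classical
  have hcond : ∀ a ∈ Icc 1 n, (a.gcd n = 1 ∧ d ∣ a ^ ℓ - 1) ↔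
      IsUnit (a : ZMod n) ∧ ((a : ZMod n).cast : ZMod d) ^ ℓ = 1 := by
    intro a ha
    rw [ZMod.isUnit_iff_coprime, ZMod.cast_natCast hd, ← Nat.cast_pow,
      ZMod.natCast_eq_one_iff_dvd_sub_one_s3 (Nat.one_le_pow _ _ (mem_Icc.mp ha).1)]
  rw [filter_congr hcond,
    ZMod.card_filter_Icc_natCast (P := fun x => IsUnit x ∧ (x.cast : ZMod d) ^ ℓ = 1),
    ← Units.card_subtype_val]
  exact Nat.card_congr (Equiv.subtypeEquivRight fun u => by
    rw [Subgroup.mem_comap, mem_rootsOfUnity', ZMod.unitsMap_val])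

theorem card_filter_range_pow_mod_eq_one {d ℓ : ℕ} [NeZero d] (hℓ : ℓ ≠ 0) :
    #{x ∈ range d | x ^ ℓ % d = 1 % d} = Nat.card (rootsOfUnity ℓ (ZMod d)) := by
  have hcond : ∀ x ∈ range d, x ^ ℓ % d = 1 % d ↔ (x : ZMod d) ^ ℓ = 1 := fun x _ => by
    rw [← ZMod.natCast_eq_natCast_iff']
    push_cast
    rfl
  rw [filter_congr hcond, ZMod.card_filter_range_natCast (P := (· ^ ℓ = 1)),
    card_rootsOfUnity_eq_card_pow_eq_one hℓ]

theorem card_filter_Icc_coprime_dvd_pow_sub_one_mul_totient {n d ℓ : ℕ} (hn : n ≠ 0)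
    (hd : d ∣ n) (hℓ : ℓ ≠ 0) :
    #{a ∈ Icc 1 n | a.gcd n = 1 ∧ d ∣ a ^ ℓ - 1} * φ d
      = φ n * #{x ∈ range d | x ^ ℓ % d = 1 % d} := by
  have : NeZero n := ⟨hn⟩
  have : NeZero d := ⟨ne_zero_of_dvd_ne_zero hn hd⟩
  rw [card_filter_Icc_coprime_dvd_pow_sub_one hd, card_filter_range_pow_mod_eq_one hℓ,
    ← ZMod.card_units_eq_totient, ← ZMod.card_units_eq_totient, ← Nat.card_eq_fintype_card,
    ← Nat.card_eq_fintype_card]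
  exact Subgroup.card_comap_mul_card_of_surjective _ (ZMod.unitsMap_surjective hd)

theorem li_kim_qiao_identity_general (n ℓ k : ℕ) (hℓ : 0 < ℓ) :
    ∑ a ∈ (Finset.Icc 1 n).filter (fun a => Nat.gcd a n = 1),
      ∑ b ∈ Fintype.piFinset (fun _ : Fin k => Finset.Icc 1 n),
        Nat.gcd (a ^ ℓ - 1) (Nat.gcd (Finset.univ.gcd b) n)
      = n.totient * ∑ d ∈ n.divisors,
          d ^ k *
            ((Finset.range (n / d)).filter (fun x => x ^ ℓ % (n / d) = 1 % (n / d))).card := by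
  rcases Nat.eq_zero_or_pos n with rfl | hn
  · simp
  rw [Nat.sum_sum_gcd_gcd_eq_sum_divisors _ _ _ _ hn.ne', ← Nat.sum_div_divisors, mul_sum]
  refine sum_congr rfl fun d hd => ?_
  have hdn : d ∣ n := Nat.dvd_of_mem_divisors hd
  rw [filter_filter, Nat.card_filter_piFinset_Icc_dvd_gcd, Fintype.card_fin,
    Nat.div_div_self hdn hn.ne']
  linear_combination d ^ k *
    card_filter_Icc_coprime_dvd_pow_sub_one_mul_totient hn.ne' (Nat.div_dvd_of_dvd hdn) hℓ.ne'

theorem li_kim_qiao_identity (n ℓ k : ℕ) (hn : 0 < n) (hℓ : 0 < ℓ) :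
    ∑ a ∈ (Finset.Icc 1 n).filter (fun a => Nat.gcd a n = 1),
      ∑ b ∈ Fintype.piFinset (fun _ : Fin k => Finset.Icc 1 n),
        Nat.gcd (a ^ ℓ - 1) (Nat.gcd (Finset.univ.gcd b) n)
      = n.totient * ∑ d ∈ n.divisors,
          d ^ k *
            ((Finset.range (n / d)).filter (fun x => x ^ ℓ % (n / d) = 1 % (n / d))).card :=
  li_kim_qiao_identity_general n ℓ k hℓ
end

section
/- The gcd-sum identity: for every positive integer n, ∑_{a=1}^{n} gcd(a,n) = n · ∑_{d∣n} φ(d)/d. -/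
open Finset

theorem gcd_sum_identity (n : ℕ) (hn : 0 < n) :
    (∑ a ∈ Finset.Icc 1 n, (Nat.gcd a n : ℚ))
      = n * ∑ d ∈ n.divisors, (d.totient : ℚ) / d := by
  have key : ∑ k ∈ range n, (Nat.gcd n k : ℚ)
      = ∑ d ∈ n.divisors, (d : ℚ) * (Nat.totient (n / d) : ℚ) := by
    rw [← Finset.sum_fiberwise_of_maps_to (g := fun k => Nat.gcd n k) (s := range n)
      (t := n.divisors) (fun k _ => Nat.mem_divisors.2 ⟨Nat.gcd_dvd_left _ _, hn.ne'⟩)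
      (fun k => (Nat.gcd n k : ℚ))]
    refine Finset.sum_congr rfl fun d hd => ?_
    rw [Finset.sum_congr rfl (fun k hk => by
      rw [(Finset.mem_filter.1 hk).2] : ∀ k ∈ _, ((Nat.gcd n k : ℚ)) = (d : ℚ)),
      Finset.sum_const, nsmul_eq_mul, ← Nat.totient_div_of_dvd (Nat.dvd_of_mem_divisors hd),
      mul_comm]
  have lhs_eq : (∑ a ∈ Finset.Icc 1 n, (Nat.gcd a n : ℚ)) = ∑ k ∈ range n, (Nat.gcd n k : ℚ) := by
    rw [← Finset.Ico_add_one_right_eq_Icc, Finset.sum_Ico_succ_top hn, Finset.range_eq_Ico,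
      Finset.sum_eq_sum_Ico_succ_bot hn]
    simp [Nat.gcd_comm, add_comm]
  rw [lhs_eq, key, Finset.mul_sum, ← Nat.sum_div_divisors n (fun d => (d : ℚ) * (Nat.totient (n/d)))]
  refine Finset.sum_congr rfl fun d hd => ?_
  have hdvd := Nat.dvd_of_mem_divisors hd
  have hd0 : (d:ℚ) ≠ 0 := Nat.cast_ne_zero.2 (Nat.pos_of_mem_divisors hd).ne'
  rw [Nat.div_div_self hdvd hn.ne']
  rw [Nat.cast_div hdvd hd0]
  field_simp
end

section
/- Lemma on counting coprime residues in an arithmetic progression: Let d, r, s be positive integers with d∣r and s∣r, and let x be an integer. Then the number of a with 1 ≤ a ≤ r, gcd(a,s)=1, and a ≡ x (mod d) equals (r/d)·∏_{p∣s, p∤d}(1 - 1/p) if gcd(d,s,x)=1, and equals 0 otherwise. -/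
/-!
Let `t` be the product of the primes dividing `s` but not `d`. When `gcd(d, s, x) = 1`, a prime
dividing both `d` and `s` divides no `a ≡ x (mod d)`, so for such `a` coprimality to `s` is
coprimality to `t`. As `gcd(d, t) = 1`, the Chinese remainder theorem makes the conditions
"`a ≡ x (mod d)` and `a` a unit mod `t`" cut out `φ(t)` classes mod `dt`, and `[1, r]` is made of
`r / (dt)` full periods; Euler's product `φ(t) = t ∏ (1 - 1/p)` finishes. When a prime `q` divides
`gcd(d, s, x)`, it divides every `a ≡ x (mod d)` and also `s`, so the count is `0`.
-/

open Finset Function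

namespace Nat

theorem count_mul_of_periodic {p : ℕ → Prop} [DecidablePred p] {m : ℕ} (hp : Periodic p m)
    (k : ℕ) : count p (k * m) = k * count p m := by
  induction k with
  | zero => simp
  | succ k ih =>
    have hshift : (fun j => p (k * m + j)) = p := funext fun j => by
      simpa [add_comm] using hp.nat_mul k j
    simp only [succ_mul, count_add, ih, hshift]

theorem card_filter_Icc_mul_of_periodic {p : ℕ → Prop} [DecidablePred p] {m : ℕ}
    (hp : Periodic p m) (k : ℕ) : #{a ∈ Icc 1 (k * m) | p a} = k * count p m := by
  have hpk : Periodic p (k * m) := by simpa using hp.nat_mul k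
  rw [← count_mul_of_periodic hp, ← filter_Ico_card_eq_of_periodic 1 _ p hpk, add_comm,
    Ico_add_one_right_eq_Icc]

end Nat

namespace ZMod

theorem card_filter_range_natCast_s5 {m : ℕ} [NeZero m] (Q : ZMod m → Prop) [DecidablePred Q] :
    #{a ∈ range m | Q ((a : ℕ) : ZMod m)} = #{z : ZMod m | Q z} := by
  refine card_nbij' (↑) val (fun a ha => ?_) (fun z hz => ?_) (fun a ha => ?_) (fun z _ => ?_)
  · simp_all
  · simp_all [val_lt]
  · simp_all [Nat.mod_eq_of_lt]
  · simp

theorem card_filter_Icc_natCast_s5 {m : ℕ} [NeZero m] (Q : ZMod m → Prop) [DecidablePred Q]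
    (k : ℕ) : #{a ∈ Icc 1 (k * m) | Q ((a : ℕ) : ZMod m)} = k * #{z : ZMod m | Q z} := by
  have hQ : Periodic (fun a : ℕ => Q a) m := fun a => by simp
  rw [Nat.card_filter_Icc_mul_of_periodic hQ, Nat.count_eq_card_filter_range,
    card_filter_range_natCast_s5]

theorem card_filter_isUnit (t : ℕ) [NeZero t] : #{v : ZMod t | IsUnit v} = t.totient := by
  simp only [← card_filter_range_natCast_s5, isUnit_iff_coprime, Nat.coprime_comm, Nat.totient]

theorem card_filter_Icc_isUnit_and_eq {d t : ℕ} [NeZero d] [NeZero t] (hdt : d.Coprime t)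
    (u : ZMod d) (k : ℕ) :
    #{a ∈ Icc 1 (k * (d * t)) | IsUnit ((a : ℕ) : ZMod t) ∧ ((a : ℕ) : ZMod d) = u}
      = k * t.totient := by
  let e := chineseRemainder hdt
  have hcount := card_filter_Icc_natCast_s5 (fun z => IsUnit (e z).2 ∧ (e z).1 = u) k
  simp only [map_natCast, Prod.fst_natCast, Prod.snd_natCast] at hcount
  have hprod : ({w | IsUnit w.2 ∧ w.1 = u} : Finset (ZMod d × ZMod t))
      = {u} ×ˢ ({v | IsUnit v} : Finset (ZMod t)) := by
    ext; simp only [mem_filter, mem_univ, mem_product, mem_singleton, true_and, and_comm]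
  rw [hcount, card_equiv e.toEquiv (t := {w | IsUnit w.2 ∧ w.1 = u}) (by simp), hprod,
    card_product, card_singleton, one_mul, card_filter_isUnit]

end ZMod

theorem Int.ModEq.dvd_gcd_gcd_iff {a d s p : ℕ} {x : ℤ} (ha : (a : ℤ) ≡ x [ZMOD d]) :
    p ∣ Int.gcd (d.gcd s) x ↔ p ∣ d ∧ p ∣ s ∧ p ∣ a := by
  rw [← Int.natCast_dvd_natCast, Int.dvd_coe_gcd_iff, Int.natCast_dvd_natCast, Nat.dvd_gcd_iff,
    and_assoc]
  refine and_congr_right fun hpd => and_congr_right fun _ => ?_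
  rw [← Int.natCast_dvd_natCast, (ha.of_dvd (Int.natCast_dvd_natCast.2 hpd)).dvd_iff]

theorem Nat.prod_primeFactors_filter_dvd (s : ℕ) (P : ℕ → Prop) [DecidablePred P] :
    ∏ p ∈ s.primeFactors.filter P, p ∣ s :=
  (prod_dvd_prod_of_subset _ _ _ (filter_subset _ _)).trans (prod_primeFactors_dvd s)

theorem Nat.coprime_iff_coprime_prod_primeFactors_of_modEq {a d s : ℕ} {x : ℤ} (hs : s ≠ 0)
    (hx : Int.gcd (d.gcd s) x = 1) (ha : (a : ℤ) ≡ x [ZMOD d]) :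
    a.Coprime s ↔ a.Coprime (∏ p ∈ s.primeFactors.filter (fun p => ¬ p ∣ d), p) := by
  refine ⟨fun h => h.coprime_dvd_right (prod_primeFactors_filter_dvd s _), fun h => ?_⟩
  by_contra hnot
  obtain ⟨p, hp, hpa, hps⟩ := Prime.not_coprime_iff_dvd.1 hnot
  have hpd : ¬ p ∣ d := fun hpd =>
    hp.ne_one (Nat.dvd_one.1 (hx ▸ ha.dvd_gcd_gcd_iff.2 ⟨hpd, hps, hpa⟩))
  exact Prime.not_coprime_iff_dvd.2 ⟨p, hp, hpa,
    dvd_prod_of_mem _ (mem_filter.2 ⟨mem_primeFactors.2 ⟨hp, hps, hs⟩, hpd⟩)⟩ h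

theorem count_coprime_in_ap (d r s : ℕ) (x : ℤ) (hd : 0 < d) (hs : 0 < s)
    (hdr : d ∣ r) (hsr : s ∣ r) :
    (((Finset.Icc 1 r).filter
        (fun a => Nat.gcd a s = 1 ∧ (a : ℤ) % (d : ℤ) = x % (d : ℤ))).card : ℚ)
      = if Int.gcd (Nat.gcd d s : ℤ) x = 1 then
          (r : ℚ) / d * ∏ p ∈ s.primeFactors.filter (fun p => ¬ p ∣ d), (1 - 1 / (p : ℚ))
        else 0 := by
  split_ifs with hx
  · set t := ∏ p ∈ s.primeFactors.filter (fun p => ¬ p ∣ d), p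
    have hprime : ∀ p ∈ s.primeFactors.filter (fun p => ¬ p ∣ d), p.Prime := fun p hp =>
      Nat.prime_of_mem_primeFactors (mem_filter.1 hp).1
    have hdt : d.Coprime t := Nat.Coprime.prod_right fun p hp =>
      ((hprime p hp).coprime_iff_not_dvd.2 (mem_filter.1 hp).2).symm
    have : NeZero d := ⟨hd.ne'⟩
    have : NeZero t := ⟨(prod_pos fun p hp => (hprime p hp).pos).ne'⟩
    obtain ⟨k, rfl⟩ : d * t ∣ r :=
      hdt.mul_dvd_of_dvd_of_dvd hdr ((Nat.prod_primeFactors_filter_dvd s _).trans hsr)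
    have hfilter : (Icc 1 (d * t * k)).filter
          (fun a => Nat.gcd a s = 1 ∧ (a : ℤ) % (d : ℤ) = x % (d : ℤ))
        = {a ∈ Icc 1 (k * (d * t)) | IsUnit ((a : ℕ) : ZMod t) ∧ ((a : ℕ) : ZMod d) = x} := by
      rw [mul_comm k]
      refine filter_congr fun a _ => ?_
      rw [ZMod.isUnit_iff_coprime, ← Int.cast_natCast (R := ZMod d), ZMod.intCast_eq_intCast_iff]
      exact and_congr_left (Nat.coprime_iff_coprime_prod_primeFactors_of_modEq hs.ne' hx)
    rw [hfilter, ZMod.card_filter_Icc_isUnit_and_eq hdt, Nat.cast_mul,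
      Nat.totient_eq_mul_prod_factors, Nat.primeFactors_prod hprime]
    push_cast
    field_simp
  · obtain ⟨q, hq, hqx⟩ := Nat.exists_prime_and_dvd hx
    rw [Nat.cast_eq_zero, card_eq_zero, filter_eq_empty_iff]
    rintro a - ⟨hcop, hmod⟩
    obtain ⟨-, hqs, hqa⟩ := (Int.ModEq.dvd_gcd_gcd_iff hmod).1 hqx
    exact hq.not_dvd_one (hcop ▸ Nat.dvd_gcd hqa hqs)
end

section
/- For any arithmetic function f : ℕ → ℂ and positive integers m, r, s with m∣r and s∣r: ∑_{a=1, gcd(a,s)=1}^{r} f(gcd(a-1,m)) = r · ∑_{d∣m} ((μ∗f)(d)/d) · ∏_{p∣s, p∤d}(1 - 1/p). -/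
/-!
Write `f = 1 ∗ (μ ∗ f)` on the positive integers; then the sum becomes
`∑_{d ∣ m} (μ ∗ f)(d) · #{a ≤ r : (a, s) = 1, a ≡ 1 (mod d)}`. Detecting `(a, s) = 1` by
`∑_{e ∣ (a, s)} μ(e)`, the congruences `a ≡ 1 (mod d)`, `a ≡ 0 (mod e)` have `r / (d e)`
solutions in `[1, r]` when `(d, e) = 1` (CRT, as `d e ∣ r`) and none otherwise. What remains is
`(r / d) ∑_{e ∣ s, (e, d) = 1} μ(e) / e`, the Euler product of the multiplicative function
`e ↦ [(e, d) = 1] / e` over the primes of `s`.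
-/

open Finset ArithmeticFunction
open scoped ArithmeticFunction.Moebius ArithmeticFunction.zeta

namespace ArithmeticFunction

theorem sum_divisors_moebius {R : Type*} [Ring R] (n : ℕ) :
    ∑ d ∈ n.divisors, (μ d : R) = if n = 1 then 1 else 0 := by
  have h := congr($(coe_moebius_mul_coe_zeta (R := R)) n)
  rw [coe_mul_zeta_apply, one_apply] at h
  simpa only [intCoe_apply] using h

theorem IsMultiplicative.sum_divisors_moebius_mul {R : Type*} [CommRing R]
    {g : ArithmeticFunction R} (hg : g.IsMultiplicative) {n : ℕ} (hn : n ≠ 0) :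
    ∑ d ∈ n.divisors, (μ d : R) * g d = ∏ p ∈ n.primeFactors, (1 - g p) := by
  set F := (μ : ArithmeticFunction R).pmul g * ζ
  have hF : F.IsMultiplicative :=
    (isMultiplicative_moebius.intCast.pmul hg).mul isMultiplicative_zeta.natCast
  have hF_prime_pow {p k : ℕ} (hp : p.Prime) (hk : k ≠ 0) : F (p ^ k) = 1 - g p := by
    obtain ⟨j, rfl⟩ := Nat.exists_eq_add_one_of_ne_zero hk
    have hhigh : ∀ i ∈ range j, (μ : ArithmeticFunction R).pmul g (p ^ (i + 1 + 1)) = 0 :=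
      fun i _ => by
        rw [pmul_apply, intCoe_apply, moebius_apply_prime_pow hp (by omega), if_neg (by omega),
          Int.cast_zero, zero_mul]
    rw [coe_mul_zeta_apply, Nat.sum_divisors_prime_pow hp, sum_range_succ', sum_range_succ',
      sum_eq_zero hhigh]
    simp [moebius_apply_prime hp, hg.map_one, sub_eq_neg_add]
  calc ∑ d ∈ n.divisors, (μ d : R) * g d = F n := by
        rw [coe_mul_zeta_apply]; rfl
    _ = ∏ p ∈ n.primeFactors, F (p ^ n.factorization p) := by
        rw [hF.multiplicative_factorization _ hn, Nat.prod_factorization_eq_prod_primeFactors]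
    _ = ∏ p ∈ n.primeFactors, (1 - g p) := prod_congr rfl fun p hp =>
        hF_prime_pow (Nat.prime_of_mem_primeFactors hp) (Finsupp.mem_support_iff.mp hp)

theorem sum_divisors_moebius_inversion {R : Type*} [Ring R] (f : ℕ → R) {n : ℕ} (hn : 0 < n) :
    ∑ d ∈ n.divisors, ∑ e ∈ d.divisors, (μ e : R) * f (d / e) = f n := by
  refine sum_eq_iff_sum_mul_moebius_eq.mpr (fun n _ => ?_) n hn
  rw [← Nat.sum_divisorsAntidiagonal (fun e c => (μ e : R) * f c)]

noncomputable def coprimeInv (K : Type*) [Field K] (d : ℕ) : ArithmeticFunction K :=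
  ⟨fun e => if e.Coprime d then (e : K)⁻¹ else 0, by simp⟩

theorem coprimeInv_apply {K : Type*} [Field K] (d e : ℕ) :
    coprimeInv K d e = if e.Coprime d then (e : K)⁻¹ else 0 := rfl

theorem isMultiplicative_coprimeInv (K : Type*) [Field K] (d : ℕ) :
    (coprimeInv K d).IsMultiplicative := by
  refine ⟨by simp [coprimeInv_apply], fun {a b} hab => ?_⟩
  simp only [coprimeInv_apply, Nat.coprime_mul_iff_left, Nat.cast_mul, mul_inv]
  split_ifs <;> simp_all

theorem sum_divisors_moebius_mul_coprimeInv {K : Type*} [Field K] (d : ℕ) {s : ℕ}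
    (hs : s ≠ 0) :
    ∑ e ∈ s.divisors, (μ e : K) * coprimeInv K d e
      = ∏ p ∈ s.primeFactors with ¬ p ∣ d, (1 - 1 / (p : K)) := by
  rw [(isMultiplicative_coprimeInv K d).sum_divisors_moebius_mul hs, prod_filter]
  refine prod_congr rfl fun p hp => ?_
  by_cases hpd : p ∣ d <;>
    simp [coprimeInv_apply, (Nat.prime_of_mem_primeFactors hp).coprime_iff_not_dvd, hpd]

end ArithmeticFunction

theorem Nat.card_filter_Icc_modEq {n r : ℕ} (hn : 0 < n) (hnr : n ∣ r) (c : ℕ) :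
    #{a ∈ Icc 1 r | a ≡ c [MOD n]} = r / n := by
  obtain ⟨k, rfl⟩ := hnr
  have h := Nat.Ioc_filter_modEq_card 0 (n * k) hn c
  have hn' : (n : ℚ) ≠ 0 := by positivity
  rw [Nat.cast_zero,
    show ((n * k : ℕ) - c) / (n : ℚ) = k + (0 - c) / n by push_cast; field_simp; ring,
    Int.floor_natCast_add, add_sub_cancel_right, max_eq_left (by positivity)] at h
  rw [Nat.mul_div_cancel_left k hn, ← zero_add 1, Icc_add_one_left_eq_Ioc]
  exact_mod_cast h

theorem Nat.card_filter_Icc_dvd_sub_one_and_dvd {d e r : ℕ} (hd : 0 < d) (he : 0 < e)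
    (hdr : d ∣ r) (her : e ∣ r) :
    #{a ∈ Icc 1 r | d ∣ a - 1 ∧ e ∣ a} = if d.Coprime e then r / (d * e) else 0 := by
  split_ifs with hde
  · obtain ⟨c, hc1, hc0⟩ := Nat.chineseRemainder hde 1 0
    rw [← card_filter_Icc_modEq (Nat.mul_pos hd he) (hde.mul_dvd_of_dvd_of_dvd hdr her) c]
    refine congrArg card (filter_congr fun a ha => ?_)
    rw [← Nat.modEq_and_modEq_iff_modEq_mul hde, ← Nat.modEq_iff_dvd' (mem_Icc.mp ha).1,
      ← Nat.modEq_zero_iff_dvd]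
    exact and_congr ⟨fun h => (h.symm.trans hc1.symm), fun h => (h.trans hc1).symm⟩
      ⟨fun h => h.trans hc0.symm, fun h => h.trans hc0⟩
  · refine Finset.card_eq_zero.mpr (filter_eq_empty_iff.mpr fun a ha ⟨hda, hea⟩ => hde ?_)
    have h := Nat.dvd_sub ((Nat.gcd_dvd_right d e).trans hea) ((Nat.gcd_dvd_left d e).trans hda)
    rwa [Nat.sub_sub_self (mem_Icc.mp ha).1, Nat.dvd_one] at h

theorem Finset.sum_sum_divisors_gcd_eq_sum_card_smul {M : Type*} [AddCommMonoid M]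
    (A : Finset ℕ) (g : ℕ → ℕ) {m : ℕ} (hm : m ≠ 0) (h : ℕ → M) :
    ∑ a ∈ A, ∑ d ∈ (Nat.gcd (g a) m).divisors, h d
      = ∑ d ∈ m.divisors, #{a ∈ A | d ∣ g a} • h d := by
  rw [sum_comm' (t' := m.divisors) (s' := fun d => {a ∈ A | d ∣ g a})]
  · simp only [sum_const]
  · intro a d
    simp only [mem_filter, Nat.mem_divisors, Nat.dvd_gcd_iff, ne_eq, Nat.gcd_eq_zero_iff, hm,
      and_false, not_false_eq_true, and_true]
    tauto

theorem Nat.card_filter_Icc_coprime_dvd_sub_one {K : Type*} [Field K] [CharZero K] {d r s : ℕ}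
    (hd : 0 < d) (hs : s ≠ 0) (hdr : d ∣ r) (hsr : s ∣ r) :
    (#{a ∈ Icc 1 r | a.Coprime s ∧ d ∣ a - 1} : K)
      = r / d * ∏ p ∈ s.primeFactors with ¬ p ∣ d, (1 - 1 / (p : K)) := by
  set B := {a ∈ Icc 1 r | d ∣ a - 1}
  have hterm : ∀ e ∈ s.divisors,
      #{a ∈ B | e ∣ a} • (μ e : K) = r / d * (μ e * coprimeInv K d e) := by
    intro e he
    have he0 : 0 < e := Nat.pos_of_mem_divisors he
    have her : e ∣ r := (Nat.dvd_of_mem_divisors he).trans hsr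
    rw [filter_filter, card_filter_Icc_dvd_sub_one_and_dvd hd he0 hdr her, coprimeInv_apply]
    by_cases hde : d.Coprime e
    · rw [if_pos hde, if_pos hde.symm, nsmul_eq_mul,
        Nat.cast_div (hde.mul_dvd_of_dvd_of_dvd hdr her)
          (by exact_mod_cast (Nat.mul_pos hd he0).ne')]
      push_cast
      field_simp
    · simp [hde, Nat.coprime_comm.not.mp hde]
  calc (#{a ∈ Icc 1 r | a.Coprime s ∧ d ∣ a - 1} : K)
      = ∑ a ∈ B, if a.gcd s = 1 then 1 else 0 := by
        rw [sum_boole, filter_filter]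
        simp_rw [and_comm]
    _ = ∑ a ∈ B, ∑ e ∈ (a.gcd s).divisors, (μ e : K) := by
        simp only [sum_divisors_moebius]
    _ = ∑ e ∈ s.divisors, #{a ∈ B | e ∣ a} • (μ e : K) :=
        sum_sum_divisors_gcd_eq_sum_card_smul B id hs _
    _ = r / d * ∏ p ∈ s.primeFactors with ¬ p ∣ d, (1 - 1 / (p : K)) := by
        rw [sum_congr rfl hterm, ← mul_sum, sum_divisors_moebius_mul_coprimeInv d hs]

theorem menon_type_general_f_general (f : ℕ → ℂ) (m r s : ℕ) (hm : 0 < m) (hs : 0 < s)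
    (hmr : m ∣ r) (hsr : s ∣ r) :
    ∑ a ∈ (Finset.Icc 1 r).filter (fun a => Nat.gcd a s = 1), f (Nat.gcd (a - 1) m)
      = r * ∑ d ∈ m.divisors,
          ((∑ e ∈ d.divisors, (ArithmeticFunction.moebius e : ℂ) * f (d / e)) / d) *
            ∏ p ∈ s.primeFactors.filter (fun p => ¬ p ∣ d), (1 - 1 / (p : ℂ)) := by
  set A := (Finset.Icc 1 r).filter (fun a => Nat.gcd a s = 1)
  set g : ℕ → ℂ := fun d => ∑ e ∈ d.divisors, (μ e : ℂ) * f (d / e)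
  calc ∑ a ∈ A, f (Nat.gcd (a - 1) m)
      = ∑ a ∈ A, ∑ d ∈ (Nat.gcd (a - 1) m).divisors, g d :=
        sum_congr rfl fun a _ =>
          (sum_divisors_moebius_inversion f (Nat.gcd_pos_of_pos_right _ hm)).symm
    _ = ∑ d ∈ m.divisors, #{a ∈ A | d ∣ a - 1} • g d :=
        sum_sum_divisors_gcd_eq_sum_card_smul A (· - 1) hm.ne' g
    _ = _ := by
        rw [mul_sum]
        refine sum_congr rfl fun d hd => ?_
        have hd0 : 0 < d := Nat.pos_of_mem_divisors hd
        rw [filter_filter, nsmul_eq_mul, Nat.card_filter_Icc_coprime_dvd_sub_one hd0 hs.ne'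
          ((Nat.dvd_of_mem_divisors hd).trans hmr) hsr]
        simp only [g]
        ring

theorem menon_type_general_f (f : ℕ → ℂ) (m r s : ℕ) (hm : 0 < m) (hr : 0 < r) (hs : 0 < s)
    (hmr : m ∣ r) (hsr : s ∣ r) :
    ∑ a ∈ (Finset.Icc 1 r).filter (fun a => Nat.gcd a s = 1), f (Nat.gcd (a - 1) m)
      = r * ∑ d ∈ m.divisors,
          ((∑ e ∈ d.divisors, (ArithmeticFunction.moebius e : ℂ) * f (d / e)) / d) *
            ∏ p ∈ s.primeFactors.filter (fun p => ¬ p ∣ d), (1 - 1 / (p : ℂ)) :=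
  menon_type_general_f_general f m r s hm hs hmr hsr
end

section
/- Menon's multiplicativity lemma: If f is a multiplicative arithmetic function of r variables and P₁,…,P_r ∈ ℤ[x], then F(n) := ∑_{a=1}^{n} f(gcd(P₁(a),n), …, gcd(P_r(a),n)) is a multiplicative function of n. -/
/-- A function of `r` natural-number variables is multiplicative. -/
def IsMultiplicativeK (r : ℕ) (f : (Fin r → ℕ) → ℂ) : Prop :=
  f (fun _ => 1) = 1 ∧
    ∀ m n : Fin r → ℕ, Nat.Coprime (∏ i, m i) (∏ i, n i) →
      f (fun i => m i * n i) = f m * f n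

/-- Menon's sum `F(n) = ∑_{a=1}^n f(gcd(P₁(a),n), …, gcd(P_r(a),n))`. -/
noncomputable def menonF (r : ℕ) (f : (Fin r → ℕ) → ℂ) (P : Fin r → Polynomial ℤ)
    (n : ℕ) : ℂ :=
  ∑ a ∈ Finset.Icc 1 n, f (fun i => Int.gcd ((P i).eval (a : ℤ)) (n : ℤ))

/-!
Reducing `a` modulo `n` does not change any `gcd(Pᵢ(a), n)`, so the summand of `F(n)` is a
function on `ZMod n` and `F(n)` is its sum over `ZMod n`. For coprime `m` and `n` the summand of
`F(mn)` at `a` is the product of the summands of `F(m)` and `F(n)` at `a`, because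
`gcd(x, mn) = gcd(x, m) gcd(x, n)` and the two gcd-vectors have coprime products. Summing over
`ZMod (mn) ≃ ZMod m × ZMod n` (Chinese remainder theorem) then factors `F(mn)` as `F(m) F(n)`.
-/

open Finset

theorem Int.ModEq.gcd_eq {n a b : ℤ} (h : a ≡ b [ZMOD n]) : Int.gcd a n = Int.gcd b n := by
  obtain ⟨k, hk⟩ := Int.modEq_iff_dvd.mp h
  rw [show b = a + n * k by omega, Int.gcd_add_mul_left_left]

theorem Int.ModEq.polynomial_eval {n a b : ℤ} (p : Polynomial ℤ) (h : a ≡ b [ZMOD n]) :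
    p.eval a ≡ p.eval b [ZMOD n] :=
  Int.modEq_iff_dvd.mpr ((Int.modEq_iff_dvd.mp h).trans (Polynomial.sub_dvd_eval_sub b a p))

theorem ZMod.natCast_val_natCast_intModEq (n a : ℕ) :
    (((a : ZMod n).val : ℕ) : ℤ) ≡ a [ZMOD n] := by
  rw [ZMod.val_natCast, Int.natCast_modEq_iff]
  exact Nat.mod_modEq a n

section PeriodicSums

variable {M : Type*}

theorem sum_Icc_one_eq_sum_zmod_val [AddCommMonoid M] {n : ℕ} [NeZero n] {g : ℤ → M}
    (hg : ∀ a b, a ≡ b [ZMOD n] → g a = g b) :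
    ∑ a ∈ Icc 1 n, g a = ∑ z : ZMod n, g z.val := by
  refine sum_nbij' (fun a => (a : ZMod n)) (fun z => if z = 0 then n else z.val)
    (fun _ _ => mem_univ _) ?_ ?_ ?_ ?_
  · intro z _
    split_ifs with hz <;>
      simp [Nat.one_le_iff_ne_zero, NeZero.ne n, hz, (ZMod.val_lt z).le]
  · intro a ha
    obtain ⟨ha1, han⟩ := mem_Icc.mp ha
    rcases han.lt_or_eq with han | rfl
    · have : (a : ZMod n) ≠ 0 := by
        rw [Ne, ZMod.natCast_eq_zero_iff]
        exact Nat.not_dvd_of_pos_of_lt ha1 han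
      simp [this, ZMod.val_natCast_of_lt han]
    · simp
  · intro z _
    split_ifs with hz <;> simp [hz]
  · intro a _
    exact hg _ _ (ZMod.natCast_val_natCast_intModEq n a).symm

theorem sum_zmod_mul_val_eq_mul_sum [CommSemiring M] {m n : ℕ} [NeZero m] [NeZero n]
    (hmn : m.Coprime n) {g h : ℤ → M} (hg : ∀ a b, a ≡ b [ZMOD m] → g a = g b)
    (hh : ∀ a b, a ≡ b [ZMOD n] → h a = h b) :
    ∑ z : ZMod (m * n), g z.val * h z.val =
      (∑ x : ZMod m, g x.val) * ∑ y : ZMod n, h y.val := by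
  rw [sum_mul_sum, ← Fintype.sum_prod_type']
  refine Fintype.sum_equiv (ZMod.chineseRemainder hmn).toEquiv _ _ fun z => ?_
  have hcrt : ZMod.chineseRemainder hmn z = ((z.val : ℕ) : ZMod m × ZMod n) := by
    rw [← map_natCast (ZMod.chineseRemainder hmn), ZMod.natCast_zmod_val]
  simp only [RingEquiv.toEquiv_eq_coe, EquivLike.coe_coe, hcrt, Prod.fst_natCast,
    Prod.snd_natCast]
  rw [hg _ _ (ZMod.natCast_val_natCast_intModEq m z.val),
    hh _ _ (ZMod.natCast_val_natCast_intModEq n z.val)]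

end PeriodicSums

theorem apply_gcd_eval_congr {ι α : Type*} (f : (ι → ℕ) → α) (P : ι → Polynomial ℤ) (n : ℕ)
    {a b : ℤ} (h : a ≡ b [ZMOD n]) :
    f (fun i => Int.gcd ((P i).eval a) n) = f (fun i => Int.gcd ((P i).eval b) n) := by
  simp only [(h.polynomial_eval _).gcd_eq]

theorem menonF_eq_sum_zmod (r : ℕ) (f : (Fin r → ℕ) → ℂ) (P : Fin r → Polynomial ℤ) (n : ℕ)
    [NeZero n] : menonF r f P n = ∑ z : ZMod n, f (fun i => Int.gcd ((P i).eval z.val) n) :=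
  sum_Icc_one_eq_sum_zmod_val fun _ _ => apply_gcd_eval_congr f P n

theorem IsMultiplicativeK.apply_gcd_mul {r : ℕ} {f : (Fin r → ℕ) → ℂ}
    (hf : IsMultiplicativeK r f) {m n : ℕ} (hmn : m.Coprime n) (x : Fin r → ℤ) :
    f (fun i => Int.gcd (x i) ((m * n : ℕ) : ℤ)) =
      f (fun i => Int.gcd (x i) m) * f (fun i => Int.gcd (x i) n) := by
  have hcop : Nat.Coprime (∏ i, Int.gcd (x i) m) (∏ i, Int.gcd (x i) n) :=
    Nat.Coprime.prod_left fun i _ => Nat.Coprime.prod_right fun j _ =>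
      (hmn.coprime_dvd_left (Int.gcd_dvd_natAbs_right (x i) m)).coprime_dvd_right
        (Int.gcd_dvd_natAbs_right (x j) n)
  rw [← hf.2 _ _ hcop]
  congr 1
  funext i
  exact Nat.Coprime.gcd_mul _ hmn

theorem menon_multiplicativity_lemma (r : ℕ) (f : (Fin r → ℕ) → ℂ)
    (hf : IsMultiplicativeK r f) (P : Fin r → Polynomial ℤ) :
    menonF r f P 1 = 1 ∧
      ∀ m n : ℕ, 0 < m → 0 < n → Nat.Coprime m n →
        menonF r f P (m * n) = menonF r f P m * menonF r f P n := by
  refine ⟨by simp [menonF, hf.1], fun m n hm hn hmn => ?_⟩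
  have : NeZero m := ⟨hm.ne'⟩
  have : NeZero n := ⟨hn.ne'⟩
  rw [menonF_eq_sum_zmod, menonF_eq_sum_zmod, menonF_eq_sum_zmod,
    ← sum_zmod_mul_val_eq_mul_sum hmn (fun _ _ => apply_gcd_eval_congr f P m)
      fun _ _ => apply_gcd_eval_congr f P n]
  exact Fintype.sum_congr _ _ fun z => hf.apply_gcd_mul hmn _
end
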